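/- If a graph G on n vertices is a (k,α)-expander (with α ≥ 1 and k a positive integer, n > k), then G contains a path of length at least ⌊αk⌋ (in edges). In particular, a (k,2)-expander contains a path of length at least 2k. -/

import Mathlib

open scoped Classical

/-- External neighborhood of a vertex set `S` in a graph `G`. -/
noncomputable def extNbhd {V : Type*} [Fintype V] [DecidableEq V]
    (G : SimpleGraph V) (S : Finset V) : Finset V :=
  Finset.univ.filter (fun v => v ∉ S ∧ ∃ u ∈ S, G.Adj u v)

/-!
Run depth-first search from an arbitrary vertex, keeping the set `S` of finished vertices and
the stack, which is always a path. Every outside neighbour of `S` is on the stack, since a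
vertex is finished only when all its neighbours have been visited. At the moment `S` reaches
size `k`, the vertex just finished is still the top of the stack, so `α k ≤ |N(S)|` is at most
the length of the stack.
-/

section

open SimpleGraph Finset

variable {V : Type*} [DecidableEq V] {G : SimpleGraph V}

theorem SimpleGraph.Walk.IsPath.card_le_length {u v : V} {p : G.Walk u v} (hp : p.IsPath)
    {A : Finset V} (hA : A ⊆ p.support.toFinset.erase u) : #A ≤ p.length := by
  have hsupp : #p.support.toFinset = p.length + 1 := by
    rw [List.toFinset_card_of_nodup hp.support_nodup, Walk.length_support]
  have := card_le_card hA
  rw [card_erase_of_mem (List.mem_toFinset.2 p.start_mem_support), hsupp] at this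
  omega

variable [Fintype V]

theorem mem_extNbhd {S : Finset V} {x : V} :
    x ∈ extNbhd G S ↔ x ∉ S ∧ ∃ u ∈ S, G.Adj u x := by
  simp [extNbhd]

theorem mem_extNbhd_insert {S : Finset V} {u x : V} (hx : x ∈ extNbhd G (insert u S)) :
    x ≠ u ∧ x ∉ S ∧ (x ∈ extNbhd G S ∨ G.Adj u x) := by
  simp only [mem_extNbhd, mem_insert, not_or, exists_eq_or_imp] at hx ⊢
  exact ⟨hx.1.1, hx.1.2, hx.2.symm.imp_left (⟨hx.1.2, ·⟩)⟩

@[simp]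
theorem extNbhd_empty : extNbhd G ∅ = ∅ := by
  simp [extNbhd]

/-- A snapshot of depth-first search: `S` is the set of finished vertices and `p` is the stack,
with top `u` and bottom `v`. -/
structure IsDFSState (S : Finset V) {u v : V} (p : G.Walk u v) : Prop where
  isPath : p.IsPath
  notMem_support : ∀ x ∈ S, x ∉ p.support
  extNbhd_subset : ∀ x ∈ extNbhd G S, x ∈ p.support

namespace IsDFSState

variable {S : Finset V} {u v : V}

theorem of_nil {y : V} (hy : y ∉ S) (hS : extNbhd G S = ∅) :
    IsDFSState S (Walk.nil : G.Walk y y) where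
  isPath := Walk.IsPath.nil
  notMem_support x hx hxy := hy (List.mem_singleton.1 hxy ▸ hx)
  extNbhd_subset x hx := by simp [hS] at hx

theorem cons {p : G.Walk u v} (h : IsDFSState S p) {x : V} (hux : G.Adj u x) (hxS : x ∉ S)
    (hxp : x ∉ p.support) : IsDFSState S (Walk.cons hux.symm p) where
  isPath := h.isPath.cons hxp
  notMem_support y hy hyp := by
    rcases List.mem_cons.1 (Walk.support_cons _ _ ▸ hyp) with rfl | hyp
    · exact hxS hy
    · exact h.notMem_support y hy hyp
  extNbhd_subset y hy := Walk.support_cons _ _ ▸ List.mem_cons_of_mem _ (h.extNbhd_subset y hy)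

theorem extNbhd_insert_subset {p : G.Walk u v} (h : IsDFSState S p)
    (hstuck : ∀ x, G.Adj u x → x ∉ S → x ∈ p.support) :
    extNbhd G (insert u S) ⊆ p.support.toFinset.erase u := by
  intro x hx
  obtain ⟨hxu, hxS, hx⟩ := mem_extNbhd_insert hx
  refine mem_erase.2 ⟨hxu, List.mem_toFinset.2 ?_⟩
  rcases hx with hx | hux
  · exact h.extNbhd_subset x hx
  · exact hstuck x hux hxS

theorem pop {w : V} {hw : G.Adj u w} {q : G.Walk w v} (h : IsDFSState S (Walk.cons hw q))
    (hstuck : ∀ x, G.Adj u x → x ∉ S → x ∈ (Walk.cons hw q).support) :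
    IsDFSState (insert u S) q where
  isPath := (Walk.cons_isPath_iff _ _).1 h.isPath |>.1
  notMem_support x hx hxq := by
    rcases mem_insert.1 hx with rfl | hx
    · exact ((Walk.cons_isPath_iff _ _).1 h.isPath).2 hxq
    · exact h.notMem_support x hx (Walk.support_cons _ _ ▸ List.mem_cons_of_mem _ hxq)
  extNbhd_subset x hx := by
    have hx := mem_erase.1 (h.extNbhd_insert_subset hstuck hx)
    rw [List.mem_toFinset, Walk.support_cons, List.mem_cons] at hx
    exact hx.2.resolve_left hx.1

theorem exists_card_eq {k : ℕ} (hk : k ≤ Fintype.card V) {S : Finset V} {u v : V}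
    {p : G.Walk u v} (h : IsDFSState S p) (hS : #S < k) :
    ∃ T : Finset V, #T = k ∧
      ∃ (a b : V) (q : G.Walk a b), q.IsPath ∧ #(extNbhd G T) ≤ q.length := by
  by_cases hext : ∃ x, G.Adj u x ∧ x ∉ S ∧ x ∉ p.support
  · obtain ⟨x, hux, hxS, hxp⟩ := hext
    have hlen := (h.cons hux hxS hxp).isPath.length_lt
    exact (h.cons hux hxS hxp).exists_card_eq hk hS
  push Not at hext
  have hcard : #(insert u S) = #S + 1 :=
    card_insert_of_notMem fun hu => h.notMem_support u hu p.start_mem_support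
  obtain hdone | hlt : #(insert u S) = k ∨ #(insert u S) < k := by omega
  · exact ⟨_, hdone, u, v, p, h.isPath, h.isPath.card_le_length (h.extNbhd_insert_subset hext)⟩
  cases p with
  | nil =>
    have hempty : extNbhd G (insert u S) = ∅ := by
      simpa using h.extNbhd_insert_subset hext
    obtain ⟨y, -, hy⟩ :=
      exists_mem_notMem_of_card_lt_card (s := insert u S) (t := univ) (by rw [card_univ]; omega)
    exact (of_nil hy hempty).exists_card_eq hk hlt
  | cons hw q =>
    exact (h.pop hext).exists_card_eq hk hlt
termination_by (k - #S, Fintype.card V - p.length)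
decreasing_by
  · exact Prod.Lex.right _ (by rw [Walk.length_cons] at hlen ⊢; omega)
  all_goals exact Prod.Lex.left _ _ (by omega)

end IsDFSState

theorem exists_isPath_card_extNbhd_le [Nonempty V] (G : SimpleGraph V) {k : ℕ}
    (hk : k ≤ Fintype.card V) :
    ∃ T : Finset V, #T = k ∧
      ∃ (a b : V) (q : G.Walk a b), q.IsPath ∧ #(extNbhd G T) ≤ q.length := by
  obtain ⟨v⟩ := ‹Nonempty V›
  rcases Nat.eq_zero_or_pos k with rfl | hpos
  · exact ⟨∅, card_empty, v, v, .nil, .nil, by simp⟩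
  exact (IsDFSState.of_nil (notMem_empty v) extNbhd_empty).exists_card_eq hk hpos

end

theorem stmt_8_general {V : Type*} [Fintype V] [DecidableEq V] (G : SimpleGraph V)
    (k : ℕ) (α : ℝ) (hcard : k < Fintype.card V)
    (hexp : ∀ U : Finset V, U.card ≤ k → α * U.card ≤ ((extNbhd G U).card : ℝ)) :
    ∃ (u v : V) (p : G.Walk u v), p.IsPath ∧ ⌊α * k⌋₊ ≤ p.length := by
  have : Nonempty V := Fintype.card_pos_iff.1 (by omega)
  obtain ⟨T, hT, u, v, p, hp, hlen⟩ := exists_isPath_card_extNbhd_le G hcard.le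
  refine ⟨u, v, p, hp, Nat.floor_le_of_le ?_⟩
  calc α * k = α * T.card := by rw [hT]
    _ ≤ (extNbhd G T).card := hexp T hT.le
    _ ≤ p.length := by exact_mod_cast hlen

theorem stmt_8 {V : Type*} [Fintype V] [DecidableEq V] (G : SimpleGraph V)
    (k : ℕ) (α : ℝ) (hα : 1 ≤ α) (hk : 0 < k) (hcard : k < Fintype.card V)
    (hexp : ∀ U : Finset V, U.card ≤ k → α * U.card ≤ ((extNbhd G U).card : ℝ)) :
    ∃ (u v : V) (p : G.Walk u v), p.IsPath ∧ ⌊α * k⌋₊ ≤ p.length :=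
  stmt_8_general G k α hcard hexp
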